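/- Let r > 0, T > 0 and 2 < q < ∞. If q > (π/T)^{2r} + 2, then the sharp embedding constant λ_{q,r}(T) := inf over nonzero y in H^r(-T,T) of ‖y‖_{H^r}/‖y‖_{L_q(-T,T)} satisfies λ_{q,r}(T) < (2T)^{1/2-1/q}; equivalently, there exists a nonzero y ∈ H^r(-T,T) with ‖y‖_{H^r} < (2T)^{1/2-1/q}·‖y‖_{L_q(-T,T)}. In particular the constant function c(x) ≡ 1 does not attain the infimum. -/

import Mathlib

open MeasureTheory intervalIntegral

/-- Fourier coefficient of a (2T-periodic) function y with respect to the orthonormal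
exponential system (2T)^{-1/2}*e^{i pi k x/T} on (-T,T). -/
noncomputable def fcoef (T : ℝ) (y : ℝ → ℝ) (k : ℤ) : ℂ :=
  (Real.sqrt (2 * T) : ℂ)⁻¹ *
    ∫ x in (-T)..T, (y x : ℂ) * Complex.exp (-(Complex.I * Real.pi * k * x) / T)

/-- The squared H^r(-T,T) norm: ‖y‖²_{H^r} = Σ_{k∈ℤ} |ŷ_k|²·[(πk/T)^{2r} + 1]. -/
noncomputable def hrNormSq (r T : ℝ) (y : ℝ → ℝ) : ℝ :=
  ∑' k : ℤ, ‖fcoef T y k‖ ^ 2 * (|Real.pi * k / T| ^ (2 * r) + 1)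

/-!
Test the inequality on `y = 1 + ε cos (π x / T)`. Only the modes `k = 0, ±1` of `y` are nonzero,
so `‖y‖²_{H^r} = 2T (1 + A ε² / 2)` with `A = (π/T)^{2r} + 1`. On the other side,
`(1 + u)^q ≥ 1 + q u + c u²` near `u = 0` for every `c < q(q-1)/2` (second-derivative test), and
`cos` has mean `0` and mean square `1/2` over a period, so `∫ |y|^q ≥ 2T (1 + c ε² / 2)`.
The claim thus reduces to `(1 + A ε² / 2)^{q/2} < 1 + c ε² / 2`, which holds for small `ε`
once `q A / 2 < c`; such a `c` exists precisely because `A < q - 1`.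
-/

open Real Set Filter Topology

section FourierCoefficients

variable {T : ℝ}

lemma integral_exp_I_pi_int_mul (hT : T ≠ 0) (n : ℤ) :
    ∫ x in (-T)..T, Complex.exp (Complex.I * π * n * x / T) =
      if n = 0 then (2 * T : ℂ) else 0 := by
  split_ifs with hn
  · simp only [hn, Int.cast_zero, mul_zero, zero_mul, zero_div, Complex.exp_zero,
      intervalIntegral.integral_const, sub_neg_eq_add, Complex.real_smul, Complex.ofReal_add,
      mul_one]
    ring
  have hT' : (T : ℂ) ≠ 0 := by exact_mod_cast hT
  have ha : Complex.I * π * n / T ≠ 0 := by simp [hn, hT, Real.pi_ne_zero, Complex.I_ne_zero]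
  simp only [show ∀ x : ℂ, Complex.I * π * n * x / T = Complex.I * π * n / T * x from
    fun x ↦ by ring]
  rw [integral_exp_mul_complex ha, div_eq_zero_iff, sub_eq_zero]
  left
  have hper : Complex.I * π * n / T * T =
      Complex.I * π * n / T * (-T : ℝ) + n * (2 * π * Complex.I) := by
    push_cast; field_simp; ring
  rw [hper, Complex.exp_add, Complex.exp_int_mul_two_pi_mul_I, mul_one]

lemma one_add_cos_mul_exp_eq (T ε : ℝ) (k : ℤ) (x : ℝ) :
    ((1 + ε * cos (π * x / T) : ℝ) : ℂ) * Complex.exp (-(Complex.I * π * k * x) / T) =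
      Complex.exp (Complex.I * π * (-k : ℤ) * x / T)
        + ε / 2 * (Complex.exp (Complex.I * π * (1 - k : ℤ) * x / T)
          + Complex.exp (Complex.I * π * (-1 - k : ℤ) * x / T)) := by
  have hcos := Complex.two_cos (π * x / T)
  rw [show Complex.I * π * ((-k : ℤ) : ℂ) * x / T = -(Complex.I * π * k * x) / T by
    push_cast; ring]
  push_cast
  rw [show Complex.I * π * (1 - k) * x / T =
      π * x / T * Complex.I + -(Complex.I * π * k * x) / T by ring,
    show Complex.I * π * (-1 - k) * x / T =
      -(π * x / T) * Complex.I + -(Complex.I * π * k * x) / T by ring,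
    Complex.exp_add, Complex.exp_add]
  linear_combination (ε / 2 : ℂ) * Complex.exp (-(Complex.I * π * k * x) / T) * hcos

lemma fcoef_one_add_cos (hT : 0 < T) (ε : ℝ) (k : ℤ) :
    fcoef T (fun x ↦ 1 + ε * cos (π * x / T)) k =
      √(2 * T) * ((if k = 0 then 1 else 0) +
        ε / 2 * ((if k = 1 then 1 else 0) + (if k = -1 then 1 else 0))) := by
  have hmode (n : ℤ) :
      IntervalIntegrable (fun x : ℝ ↦ Complex.exp (Complex.I * π * n * x / T)) volume (-T) T :=
    (by fun_prop : Continuous _).intervalIntegrable _ _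
  simp only [fcoef, one_add_cos_mul_exp_eq]
  rw [intervalIntegral.integral_add (hmode _) (((hmode _).add (hmode _)).const_mul _),
    intervalIntegral.integral_const_mul, intervalIntegral.integral_add (hmode _) (hmode _)]
  simp only [integral_exp_I_pi_int_mul hT.ne', neg_eq_zero, sub_eq_zero, eq_comm (a := (1 : ℤ)),
    show ∀ k : ℤ, -1 - k = 0 ↔ k = -1 from fun k ↦ by omega]
  have hsq : ((√(2 * T) : ℝ) : ℂ) * √(2 * T) = 2 * T := by
    exact_mod_cast Real.mul_self_sqrt (by positivity : (0 : ℝ) ≤ 2 * T)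
  have hs : ((√(2 * T) : ℝ) : ℂ) ≠ 0 := by
    exact_mod_cast (Real.sqrt_pos.2 (by positivity)).ne'
  rw [← hsq]
  split_ifs <;> first | omega | (field_simp; ring)

lemma fcoef_one_add_cos_eq_zero (hT : 0 < T) (ε : ℝ) {k : ℤ}
    (hk : k ∉ ({-1, 0, 1} : Finset ℤ)) :
    fcoef T (fun x ↦ 1 + ε * cos (π * x / T)) k = 0 := by
  simp only [Finset.mem_insert, Finset.mem_singleton, not_or] at hk
  simp [fcoef_one_add_cos hT, hk]

variable {r : ℝ}

lemma summable_hr_one_add_cos (hT : 0 < T) (ε : ℝ) :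
    Summable fun k : ℤ ↦
      ‖fcoef T (fun x ↦ 1 + ε * cos (π * x / T)) k‖ ^ 2 * (|π * k / T| ^ (2 * r) + 1) :=
  summable_of_ne_finset_zero (s := {-1, 0, 1}) fun k hk ↦ by
    simp [fcoef_one_add_cos_eq_zero hT ε hk]

lemma hrNormSq_one_add_cos (hr : 0 < r) (hT : 0 < T) (ε : ℝ) :
    hrNormSq r T (fun x ↦ 1 + ε * cos (π * x / T)) =
      2 * T + ε ^ 2 * T * ((π / T) ^ (2 * r) + 1) := by
  rw [hrNormSq, tsum_eq_sum (s := {-1, 0, 1}) fun k hk ↦ by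
    simp [fcoef_one_add_cos_eq_zero hT ε hk]]
  rw [Finset.sum_insert (by decide), Finset.sum_insert (by decide), Finset.sum_singleton]
  have hsq : ‖(√(2 * T) : ℂ)‖ ^ 2 = 2 * T := by
    rw [Complex.norm_real, Real.norm_eq_abs, sq_abs, Real.sq_sqrt (by positivity)]
  simp only [fcoef_one_add_cos hT, norm_mul, mul_pow, hsq]
  norm_num [neg_div, abs_of_pos (by positivity : 0 < π / T), div_pow,
    Real.zero_rpow (by positivity : 2 * r ≠ 0)]
  ring

end FourierCoefficients

lemma integral_cos_pi_mul_div {T : ℝ} (hT : T ≠ 0) :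
    ∫ x in (-T)..T, cos (π * x / T) = 0 := by
  simp only [mul_div_right_comm π, mul_comm (π / T)]
  rw [intervalIntegral.integral_comp_mul_right _ (div_ne_zero Real.pi_ne_zero hT)]
  simp [mul_div_cancel₀ π hT]

lemma integral_cos_pi_mul_div_sq {T : ℝ} (hT : T ≠ 0) :
    ∫ x in (-T)..T, cos (π * x / T) ^ 2 = T := by
  simp only [mul_div_right_comm π, mul_comm (π / T)]
  rw [intervalIntegral.integral_comp_mul_right (fun x ↦ cos x ^ 2)
    (div_ne_zero Real.pi_ne_zero hT), integral_cos_sq]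
  field_simp
  simp

lemma eventually_one_add_mul_add_mul_sq_le_rpow {q c : ℝ} (hc : 2 * c < q * (q - 1)) :
    ∀ᶠ u in 𝓝 (0 : ℝ), 1 + q * u + c * u ^ 2 ≤ (1 + u) ^ q := by
  have hderiv : ∀ᶠ u in 𝓝 (0 : ℝ),
      HasDerivAt (fun u : ℝ ↦ (1 + u) ^ q - q * u - c * u ^ 2)
        (q * (1 + u) ^ (q - 1) - q - 2 * c * u) u := by
    filter_upwards [eventually_gt_nhds (show (-1 : ℝ) < 0 by norm_num)] with u hu
    have hu' : 1 + u ≠ 0 := by linarith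
    exact ((((hasDerivAt_id' u).const_add 1).rpow_const (Or.inl hu')).sub
      ((hasDerivAt_id' u).const_mul q)).sub ((hasDerivAt_pow 2 u).const_mul c)
      |>.congr_deriv (by push_cast; ring)
  have hderiv2 : HasDerivAt (fun u : ℝ ↦ q * (1 + u) ^ (q - 1) - q - 2 * c * u)
      (q * (q - 1) - 2 * c) 0 :=
    (((((hasDerivAt_id' (0 : ℝ)).const_add 1).rpow_const (Or.inl (by norm_num))).const_mul q
      ).sub_const q).sub ((hasDerivAt_id' (0 : ℝ)).const_mul (2 * c)) |>.congr_deriv (by simp)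
  have hmin : IsLocalMin (fun u : ℝ ↦ (1 + u) ^ q - q * u - c * u ^ 2) 0 := by
    refine isLocalMin_of_deriv_deriv_pos ?_ ?_ hderiv.self_of_nhds.continuousAt
    · rw [Filter.EventuallyEq.deriv_eq (hderiv.mono fun u hu ↦ hu.deriv), hderiv2.deriv]
      linarith
    · simp [hderiv.self_of_nhds.deriv]
  filter_upwards [hmin] with u hu
  simp only [add_zero, Real.one_rpow, mul_zero, sub_zero, zero_pow two_ne_zero] at hu
  linarith

lemma eventually_rpow_one_add_lt {p K : ℝ} (h : p < K) :
    ∀ᶠ m in 𝓝[>] (0 : ℝ), (1 + m) ^ p < 1 + K * m := by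
  have hd : HasDerivWithinAt (fun m : ℝ ↦ (1 + m) ^ p) p (Ioi 0) 0 := by
    have := ((hasDerivAt_id' (0 : ℝ)).const_add 1).rpow_const (p := p) (Or.inl (by norm_num))
    simpa using this.hasDerivWithinAt
  filter_upwards [hd.limsup_slope_le' self_notMem_Ioi h, self_mem_nhdsWithin] with m hm hm0
  rw [slope_def_field, sub_zero, div_lt_iff₀ hm0, add_zero, Real.one_rpow] at hm
  linarith

lemma eventually_rpow_one_add_mul_sq_lt {p a b : ℝ} (ha : 0 < a) (h : p * a < b) :
    ∀ᶠ ε in 𝓝[>] (0 : ℝ), (1 + a * ε ^ 2) ^ p < 1 + b * ε ^ 2 := by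
  have hsq : Tendsto (fun ε : ℝ ↦ a * ε ^ 2) (𝓝[>] 0) (𝓝[>] 0) := by
    refine tendsto_nhdsWithin_of_tendsto_nhds_of_eventually_within _ ?_ ?_
    · have : Continuous fun ε : ℝ ↦ a * ε ^ 2 := by fun_prop
      simpa using (this.tendsto 0).mono_left nhdsWithin_le_nhds
    · filter_upwards [self_mem_nhdsWithin] with ε hε
      exact mul_pos ha (pow_pos hε 2)
  filter_upwards [hsq.eventually (eventually_rpow_one_add_lt ((lt_div_iff₀ ha).2 h))] with ε hε
  rwa [← mul_assoc, div_mul_cancel₀ b ha.ne'] at hε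

lemma add_mul_sq_le_integral_abs_one_add_cos_rpow {T q c ε : ℝ} (hT : 0 < T) (hε : 0 ≤ ε)
    (hε1 : ε < 1)
    (hquad : Metric.closedBall (0 : ℝ) ε ⊆ {u | 1 + q * u + c * u ^ 2 ≤ (1 + u) ^ q}) :
    2 * T + c * ε ^ 2 * T ≤ ∫ x in (-T)..T, |1 + ε * cos (π * x / T)| ^ q := by
  have hsmall (x : ℝ) : ε * cos (π * x / T) ∈ Metric.closedBall 0 ε := by
    rw [mem_closedBall_zero_iff, Real.norm_eq_abs, abs_mul, abs_of_nonneg hε]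
    exact mul_le_of_le_one_right hε (abs_cos_le_one _)
  have hpos (x : ℝ) : 0 < 1 + ε * cos (π * x / T) := by
    have := abs_le.1 (mem_closedBall_zero_iff.1 (hsmall x))
    linarith [this.1]
  have hint (f : ℝ → ℝ) (hf : Continuous f) : IntervalIntegrable f volume (-T) T :=
    hf.intervalIntegrable _ _
  calc 2 * T + c * ε ^ 2 * T
      = ∫ x in (-T)..T, (1 + q * ε * cos (π * x / T) + c * ε ^ 2 * cos (π * x / T) ^ 2) := by
        rw [intervalIntegral.integral_add (hint _ (by fun_prop)) (hint _ (by fun_prop)),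
          intervalIntegral.integral_add (hint _ (by fun_prop)) (hint _ (by fun_prop)),
          intervalIntegral.integral_const_mul, intervalIntegral.integral_const_mul,
          integral_cos_pi_mul_div hT.ne', integral_cos_pi_mul_div_sq hT.ne']
        simp only [intervalIntegral.integral_const, sub_neg_eq_add, smul_eq_mul, mul_one,
          mul_zero, add_zero]
        ring
    _ ≤ ∫ x in (-T)..T, |1 + ε * cos (π * x / T)| ^ q := by
        refine intervalIntegral.integral_mono_on (by linarith) (hint _ (by fun_prop))
          (hint _ ((continuous_abs.comp (by fun_prop)).rpow_const
            fun x ↦ Or.inl (abs_pos.2 (hpos x).ne').ne')) fun x _ ↦ ?_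
        rw [abs_of_pos (hpos x)]
        have : 1 + q * (ε * cos (π * x / T)) + c * (ε * cos (π * x / T)) ^ 2 ≤
            (1 + ε * cos (π * x / T)) ^ q := hquad (hsmall x)
        linarith

lemma sqrt_mul_lt_rpow_mul_rpow {a x y q : ℝ} (ha : 0 < a) (hq : 0 < q) (hx : 0 ≤ x)
    (h : x ^ (q / 2) < y) : √(a * x) < a ^ (1 / 2 - 1 / q) * (a * y) ^ (1 / q) := by
  have hy : 0 ≤ y := (Real.rpow_nonneg hx _).trans h.le
  have hxy : x ^ (1 / 2 : ℝ) < y ^ (1 / q) :=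
    calc x ^ (1 / 2 : ℝ) = (x ^ (q / 2)) ^ (1 / q) := by
          rw [← Real.rpow_mul hx]; field_simp
      _ < y ^ (1 / q) := by gcongr
  rw [Real.sqrt_eq_rpow, Real.mul_rpow ha.le hx, Real.mul_rpow ha.le hy, ← mul_assoc,
    ← Real.rpow_add ha, sub_add_cancel]
  gcongr

theorem stmt_0_general (r T q : ℝ) (hr : 0 < r) (hT : 0 < T)
    (hq : (Real.pi / T) ^ (2 * r) + 2 < q) :
    ∃ y : ℝ → ℝ, Continuous y ∧ Function.Periodic y (2 * T) ∧ y ≠ (fun _ => 0) ∧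
      Summable (fun k : ℤ => ‖fcoef T y k‖ ^ 2 * (|Real.pi * k / T| ^ (2 * r) + 1)) ∧
      Real.sqrt (hrNormSq r T y)
        < (2 * T) ^ (1 / 2 - 1 / q) * (∫ x in (-T)..T, |y x| ^ q) ^ (1 / q) := by
  set A := (π / T) ^ (2 * r) + 1
  have hA : 0 < A := by positivity
  have hAq : A + 1 < q := by simp only [A]; linarith
  have hq0 : 0 < q := by linarith
  obtain ⟨c, hcq, hcA⟩ : ∃ c, 2 * c < q * (q - 1) ∧ q / 2 * (A / 2) < c / 2 :=
    ⟨q * (A + q - 1) / 4, by nlinarith, by nlinarith⟩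
  have hball : ∀ᶠ ε in 𝓝[>] 0,
      Metric.closedBall 0 ε ⊆ {u | 1 + q * u + c * u ^ 2 ≤ (1 + u) ^ q} :=
    nhdsWithin_le_nhds <|
      eventually_closedBall_subset (eventually_one_add_mul_add_mul_sq_le_rpow hcq)
  have hsmall : ∀ᶠ ε in 𝓝[>] (0 : ℝ), ε < 1 :=
    nhdsWithin_le_nhds (eventually_lt_nhds one_pos)
  obtain ⟨ε, ⟨⟨hquad, hε1⟩, hkey⟩, hε⟩ :=
    (((hball.and hsmall).and (eventually_rpow_one_add_mul_sq_lt (half_pos hA) hcA)).and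
      self_mem_nhdsWithin).exists
  refine ⟨fun x ↦ 1 + ε * cos (π * x / T), by fun_prop, fun x ↦ ?_, fun h ↦ ?_,
    summable_hr_one_add_cos hT ε, ?_⟩
  · dsimp only
    rw [show π * (x + 2 * T) / T = π * x / T + 2 * π by field_simp, cos_add_two_pi]
  · have := congrFun h 0
    simp only [mul_zero, zero_div, cos_zero, mul_one] at this
    linarith
  · have hc : 0 < c := by nlinarith [mul_pos hq0 hA]
    rw [hrNormSq_one_add_cos hr hT,
      show 2 * T + ε ^ 2 * T * A = 2 * T * (1 + A / 2 * ε ^ 2) by ring]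
    calc _ < (2 * T) ^ (1 / 2 - 1 / q) * (2 * T * (1 + c / 2 * ε ^ 2)) ^ (1 / q) :=
          sqrt_mul_lt_rpow_mul_rpow (by positivity) hq0 (by positivity) hkey
      _ ≤ _ := by
          gcongr
          linarith [add_mul_sq_le_integral_abs_one_add_cos_rpow hT hε.le hε1 hquad]

/-- for r > 0, T > 0 and q > (π/T)^{2r} + 2 there is a nonzero
y ∈ H^r(-T,T) with ‖y‖_{H^r} < (2T)^{1/2-1/q}·‖y‖_{L_q(-T,T)}; hence
λ_{q,r}(T) < (2T)^{1/2-1/q} and the constant function 1 does not attain the infimum. -/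
theorem stmt_0 (r T q : ℝ) (hr : 0 < r) (hT : 0 < T) (hq2 : 2 < q)
    (hq : (Real.pi / T) ^ (2 * r) + 2 < q) :
    ∃ y : ℝ → ℝ, Continuous y ∧ Function.Periodic y (2 * T) ∧ y ≠ (fun _ => 0) ∧
      Summable (fun k : ℤ => ‖fcoef T y k‖ ^ 2 * (|Real.pi * k / T| ^ (2 * r) + 1)) ∧
      Real.sqrt (hrNormSq r T y)
        < (2 * T) ^ (1 / 2 - 1 / q) * (∫ x in (-T)..T, |y x| ^ q) ^ (1 / q) :=
  stmt_0_general r T q hr hT hq
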